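/- Let xL, xU, yL, yU ∈ ℝ with xL ≤ xU and yL ≤ yU. Then the convex hull in ℝ³ of the set {(x, y, x·y) : xL ≤ x ≤ xU, yL ≤ y ≤ yU} equals the polytope of points (x, y, w) ∈ ℝ³ satisfying xL ≤ x ≤ xU, yL ≤ y ≤ yU, w ≥ xL·y + x·yL − xL·yL, w ≥ xU·y + x·yU − xU·yU, w ≤ xU·y + x·yL − xU·yL, and w ≤ xL·y + x·yU − xL·yU. -/

import Mathlib

/-!
Each McCormick inequality is the linearization of a product of two box constraints, e.g.
`(x - xL) * (y - yL) ≥ 0`, so it holds on the graph of `x * y` and, being affine, on its convex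
hull. Conversely, the slacks of the four inequalities are nonnegative weights on the four corners
`(x, y, x * y)` of the box; they sum to the area `(xU - xL) * (yU - yL)`, and the weighted corners
average to the given point of the envelope (bilinear interpolation). On a box of zero area the
envelope is the graph itself.
-/

open Set

/-- The product `(x - a) * (y - b)` with `x * y` replaced by `w`. -/
def mcCormickSlack (a b : ℝ) (p : ℝ × ℝ × ℝ) : ℝ :=
  p.2.2 - a * p.2.1 - p.1 * b + a * b

lemma mcCormickSlack_mk_mul (a b x y : ℝ) :
    mcCormickSlack a b (x, y, x * y) = (x - a) * (y - b) := by
  unfold mcCormickSlack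
  ring

lemma mcCormickSlack_smul_add_smul (a b : ℝ) (p q : ℝ × ℝ × ℝ) {s t : ℝ} (hst : s + t = 1) :
    mcCormickSlack a b (s • p + t • q) = s * mcCormickSlack a b p + t * mcCormickSlack a b q := by
  simp only [mcCormickSlack, Prod.fst_add, Prod.snd_add, Prod.smul_fst, Prod.smul_snd,
    smul_eq_mul]
  linear_combination (-(a * b)) * hst

lemma convex_setOf_nonneg_mcCormickSlack (a b : ℝ) :
    Convex ℝ {p | 0 ≤ mcCormickSlack a b p} := by
  intro p hp q hq s t hs ht hst
  rw [mem_ofPred_eq, mcCormickSlack_smul_add_smul a b p q hst]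
  exact add_nonneg (mul_nonneg hs hp) (mul_nonneg ht hq)

lemma convex_setOf_nonpos_mcCormickSlack (a b : ℝ) :
    Convex ℝ {p | mcCormickSlack a b p ≤ 0} := by
  intro p hp q hq s t hs ht hst
  rw [mem_ofPred_eq, mcCormickSlack_smul_add_smul a b p q hst]
  exact add_nonpos (mul_nonpos_of_nonneg_of_nonpos hs hp) (mul_nonpos_of_nonneg_of_nonpos ht hq)

section

variable (xL xU yL yU : ℝ)

def bilinearGraph : Set (ℝ × ℝ × ℝ) :=
  {p | xL ≤ p.1 ∧ p.1 ≤ xU ∧ yL ≤ p.2.1 ∧ p.2.1 ≤ yU ∧ p.2.2 = p.1 * p.2.1}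

def mcCormickEnvelope : Set (ℝ × ℝ × ℝ) :=
  Icc xL xU ×ˢ Icc yL yU ×ˢ univ ∩ {p | 0 ≤ mcCormickSlack xL yL p} ∩
    {p | 0 ≤ mcCormickSlack xU yU p} ∩ {p | mcCormickSlack xU yL p ≤ 0} ∩
    {p | mcCormickSlack xL yU p ≤ 0}

lemma mcCormickEnvelope_eq_setOf :
    mcCormickEnvelope xL xU yL yU =
      {p : ℝ × ℝ × ℝ |
        xL ≤ p.1 ∧ p.1 ≤ xU ∧ yL ≤ p.2.1 ∧ p.2.1 ≤ yU ∧
        xL * p.2.1 + p.1 * yL - xL * yL ≤ p.2.2 ∧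
        xU * p.2.1 + p.1 * yU - xU * yU ≤ p.2.2 ∧
        p.2.2 ≤ xU * p.2.1 + p.1 * yL - xU * yL ∧
        p.2.2 ≤ xL * p.2.1 + p.1 * yU - xL * yU} := by
  ext ⟨x, y, w⟩
  simp only [mcCormickEnvelope, mcCormickSlack, mem_inter_iff, mem_prod, mem_Icc, mem_univ,
    and_true, mem_ofPred_eq]
  constructor
  · rintro ⟨⟨⟨⟨⟨hx, hy⟩, h₁⟩, h₂⟩, h₃⟩, h₄⟩
    exact ⟨hx.1, hx.2, hy.1, hy.2, by linarith, by linarith, by linarith, by linarith⟩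
  · rintro ⟨hx₁, hx₂, hy₁, hy₂, h₁, h₂, h₃, h₄⟩
    exact ⟨⟨⟨⟨⟨⟨hx₁, hx₂⟩, hy₁, hy₂⟩, by linarith⟩, by linarith⟩, by linarith⟩, by linarith⟩

lemma convex_mcCormickEnvelope : Convex ℝ (mcCormickEnvelope xL xU yL yU) :=
  ((convex_Icc xL xU).prod ((convex_Icc yL yU).prod convex_univ))
    |>.inter (convex_setOf_nonneg_mcCormickSlack xL yL)
    |>.inter (convex_setOf_nonneg_mcCormickSlack xU yU)
    |>.inter (convex_setOf_nonpos_mcCormickSlack xU yL)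
    |>.inter (convex_setOf_nonpos_mcCormickSlack xL yU)

lemma bilinearGraph_subset_mcCormickEnvelope :
    bilinearGraph xL xU yL yU ⊆ mcCormickEnvelope xL xU yL yU := by
  rintro ⟨x, y, w⟩ ⟨hx₁, hx₂, hy₁, hy₂, rfl : w = x * y⟩
  simp only [mcCormickEnvelope, mem_inter_iff, mem_ofPred_eq, mcCormickSlack_mk_mul]
  refine ⟨⟨⟨⟨⟨⟨hx₁, hx₂⟩, ⟨hy₁, hy₂⟩, trivial⟩, ?_⟩, ?_⟩, ?_⟩, ?_⟩
  · exact mul_nonneg (sub_nonneg.2 hx₁) (sub_nonneg.2 hy₁)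
  · exact mul_nonneg_of_nonpos_of_nonpos (sub_nonpos.2 hx₂) (sub_nonpos.2 hy₂)
  · exact mul_nonpos_of_nonpos_of_nonneg (sub_nonpos.2 hx₂) (sub_nonneg.2 hy₁)
  · exact mul_nonpos_of_nonneg_of_nonpos (sub_nonneg.2 hx₁) (sub_nonpos.2 hy₂)

lemma mem_bilinearGraph_of_mem_mcCormickEnvelope_of_area_eq_zero {p : ℝ × ℝ × ℝ}
    (hp : p ∈ mcCormickEnvelope xL xU yL yU) (harea : (xU - xL) * (yU - yL) = 0) :
    p ∈ bilinearGraph xL xU yL yU := by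
  obtain ⟨x, y, w⟩ := p
  obtain ⟨⟨⟨⟨⟨⟨hx₁, hx₂⟩, ⟨hy₁, hy₂⟩, -⟩, h₁⟩, h₂⟩, h₃⟩, h₄⟩ := hp
  simp only [mem_ofPred_eq, mcCormickSlack] at h₁ h₂ h₃ h₄
  refine ⟨hx₁, hx₂, hy₁, hy₂, ?_⟩
  rcases mul_eq_zero.1 harea with hx | hy
  · obtain rfl : x = xL := le_antisymm (by linarith) hx₁
    linarith
  · obtain rfl : y = yL := le_antisymm (by linarith) hy₁
    linarith

def boxCorner : Fin 4 → ℝ × ℝ × ℝ :=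
  ![(xL, yL, xL * yL), (xL, yU, xL * yU), (xU, yL, xU * yL), (xU, yU, xU * yU)]

/-- Each corner is weighted by the slack of the McCormick inequality that is tight at the
opposite corner. -/
def cornerWeight (p : ℝ × ℝ × ℝ) : Fin 4 → ℝ :=
  ![mcCormickSlack xU yU p, -mcCormickSlack xU yL p, -mcCormickSlack xL yU p,
    mcCormickSlack xL yL p]

variable {xL xU yL yU}

lemma boxCorner_mem_bilinearGraph (hx : xL ≤ xU) (hy : yL ≤ yU) (i : Fin 4) :
    boxCorner xL xU yL yU i ∈ bilinearGraph xL xU yL yU := by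
  fin_cases i <;> simp [boxCorner, bilinearGraph, hx, hy]

lemma cornerWeight_nonneg {p : ℝ × ℝ × ℝ} (hp : p ∈ mcCormickEnvelope xL xU yL yU)
    (i : Fin 4) : 0 ≤ cornerWeight xL xU yL yU p i := by
  obtain ⟨⟨⟨⟨-, h₁⟩, h₂⟩, h₃⟩, h₄⟩ := hp
  fin_cases i
  · exact h₂
  · exact neg_nonneg.2 h₃
  · exact neg_nonneg.2 h₄
  · exact h₁

variable (xL xU yL yU)

lemma sum_cornerWeight (p : ℝ × ℝ × ℝ) :
    ∑ i, cornerWeight xL xU yL yU p i = (xU - xL) * (yU - yL) := by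
  simp only [cornerWeight, mcCormickSlack, Fin.sum_univ_four, Matrix.cons_val]
  ring

lemma sum_cornerWeight_smul_boxCorner (p : ℝ × ℝ × ℝ) :
    ∑ i, cornerWeight xL xU yL yU p i • boxCorner xL xU yL yU i =
      ((xU - xL) * (yU - yL)) • p := by
  obtain ⟨x, y, w⟩ := p
  simp only [cornerWeight, boxCorner, mcCormickSlack, Fin.sum_univ_four, Matrix.cons_val,
    Prod.smul_mk, Prod.mk_add_mk, smul_eq_mul, Prod.mk.injEq]
  refine ⟨?_, ?_, ?_⟩ <;> ring

lemma centerMass_cornerWeight_boxCorner (p : ℝ × ℝ × ℝ) (harea : (xU - xL) * (yU - yL) ≠ 0) :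
    Finset.univ.centerMass (cornerWeight xL xU yL yU p) (boxCorner xL xU yL yU) = p := by
  rw [Finset.centerMass, sum_cornerWeight, sum_cornerWeight_smul_boxCorner, smul_smul,
    inv_mul_cancel₀ harea, one_smul]

lemma mcCormickEnvelope_subset_convexHull_bilinearGraph :
    mcCormickEnvelope xL xU yL yU ⊆ convexHull ℝ (bilinearGraph xL xU yL yU) := by
  intro p hp
  obtain ⟨⟨hx₁, hx₂⟩, ⟨hy₁, hy₂⟩, -⟩ := hp.1.1.1.1
  have hx : xL ≤ xU := hx₁.trans hx₂
  have hy : yL ≤ yU := hy₁.trans hy₂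
  have harea_nonneg : 0 ≤ (xU - xL) * (yU - yL) := mul_nonneg (sub_nonneg.2 hx) (sub_nonneg.2 hy)
  rcases harea_nonneg.eq_or_lt with harea | harea
  · exact subset_convexHull ℝ _
      (mem_bilinearGraph_of_mem_mcCormickEnvelope_of_area_eq_zero xL xU yL yU hp harea.symm)
  rw [← centerMass_cornerWeight_boxCorner xL xU yL yU p harea.ne']
  exact Finset.centerMass_mem_convexHull _ (fun i _ ↦ cornerWeight_nonneg hp i)
    (by rwa [sum_cornerWeight]) (fun i _ ↦ boxCorner_mem_bilinearGraph hx hy i)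

end

theorem mccormick_envelope_eq_convexHull_general
    (xL xU yL yU : ℝ) :
    convexHull ℝ
        {p : ℝ × ℝ × ℝ |
          xL ≤ p.1 ∧ p.1 ≤ xU ∧ yL ≤ p.2.1 ∧ p.2.1 ≤ yU ∧ p.2.2 = p.1 * p.2.1} =
      {p : ℝ × ℝ × ℝ |
        xL ≤ p.1 ∧ p.1 ≤ xU ∧ yL ≤ p.2.1 ∧ p.2.1 ≤ yU ∧
        xL * p.2.1 + p.1 * yL - xL * yL ≤ p.2.2 ∧
        xU * p.2.1 + p.1 * yU - xU * yU ≤ p.2.2 ∧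
        p.2.2 ≤ xU * p.2.1 + p.1 * yL - xU * yL ∧
        p.2.2 ≤ xL * p.2.1 + p.1 * yU - xL * yU} := by
  rw [← mcCormickEnvelope_eq_setOf]
  exact (convexHull_min (bilinearGraph_subset_mcCormickEnvelope xL xU yL yU)
    (convex_mcCormickEnvelope xL xU yL yU)).antisymm
    (mcCormickEnvelope_subset_convexHull_bilinearGraph xL xU yL yU)

/-- The McCormick envelope is the convex hull of the graph of
the bilinear term `w = x·y` over the box `[xL, xU] × [yL, yU]`: the convex hull
in `ℝ³` of `{(x, y, x·y) : xL ≤ x ≤ xU, yL ≤ y ≤ yU}` equals the polytope cut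
out by the box bounds together with the four McCormick inequalities. -/
theorem mccormick_envelope_eq_convexHull
    (xL xU yL yU : ℝ) (hx : xL ≤ xU) (hy : yL ≤ yU) :
    convexHull ℝ
        {p : ℝ × ℝ × ℝ |
          xL ≤ p.1 ∧ p.1 ≤ xU ∧ yL ≤ p.2.1 ∧ p.2.1 ≤ yU ∧ p.2.2 = p.1 * p.2.1} =
      {p : ℝ × ℝ × ℝ |
        xL ≤ p.1 ∧ p.1 ≤ xU ∧ yL ≤ p.2.1 ∧ p.2.1 ≤ yU ∧
        xL * p.2.1 + p.1 * yL - xL * yL ≤ p.2.2 ∧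
        xU * p.2.1 + p.1 * yU - xU * yU ≤ p.2.2 ∧
        p.2.2 ≤ xU * p.2.1 + p.1 * yL - xU * yL ∧
        p.2.2 ≤ xL * p.2.1 + p.1 * yU - xL * yU} :=
  mccormick_envelope_eq_convexHull_general xL xU yL yU
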